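/- arXiv:1404.7347 — 3 statements merged into one kernel-verified Lean document; each statement's English description precedes it below -/
import Mathlib

section
/- Let η_b ∈ (0,1], n̄_T > 0, η_w = 1 - η_b, and let n̄ ≥ 0. Define f(n̄) = η_b·n̄_T · ln( (1 + η_w·n̄ + η_b·n̄_T)·η_b·n̄_T / ((η_w·n̄ + η_b·n̄_T)·(1 + η_b·n̄_T)) ) + ln( (1 + η_w·n̄ + η_b·n̄_T)/(1 + η_b·n̄_T) ). Then for all n̄ ≥ 0, f(n̄) ≤ η_w²·n̄² / (2·η_b·n̄_T·(1 + η_b·n̄_T)). -/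
lemma thermal_qre_key (t x : ℝ) (ht : 0 < t) (hx : 0 ≤ x) :
    (t + 1) * (Real.log (1 + x + t) - Real.log (1 + t))
      - t * (Real.log (x + t) - Real.log t) ≤ x ^ 2 / (2 * t * (1 + t)) := by
  set F : ℝ → ℝ := fun y =>
    y ^ 2 / (2 * t * (1 + t)) - (t + 1) * Real.log (1 + y + t) + t * Real.log (y + t) with hF
  have ht1 : 0 < 1 + t := by linarith
  have hderiv : ∀ y : ℝ, 0 ≤ y →
      HasDerivAt F (2 * y / (2 * t * (1 + t)) - (t + 1) * (1 + y + t)⁻¹ + t * (y + t)⁻¹) y := by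
    intro y hy
    have hB : 0 < 1 + y + t := by linarith
    have hC : 0 < y + t := by linarith
    have h1 : HasDerivAt (fun z : ℝ => 1 + z + t) 1 y := by
      simpa using ((hasDerivAt_id y).const_add 1).add_const t
    have h2 : HasDerivAt (fun z : ℝ => Real.log (1 + z + t)) ((1 + y + t)⁻¹) y := by
      simpa using h1.log hB.ne'
    have h1' : HasDerivAt (fun z : ℝ => z + t) 1 y := (hasDerivAt_id y).add_const t
    have h3 : HasDerivAt (fun z : ℝ => Real.log (z + t)) ((y + t)⁻¹) y := by
      simpa using h1'.log hC.ne'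
    have h4 : HasDerivAt (fun z : ℝ => z ^ 2 / (2 * t * (1 + t))) (2 * y / (2 * t * (1 + t))) y := by
      simpa using (hasDerivAt_pow 2 y).div_const (2 * t * (1 + t))
    exact (h4.sub (h2.const_mul (t + 1))).add (h3.const_mul t)
  have hmono : MonotoneOn F (Set.Ici (0 : ℝ)) := by
    apply monotoneOn_of_deriv_nonneg (convex_Ici 0)
    · intro y hy
      exact (hderiv y hy).continuousAt.continuousWithinAt
    · intro y hy
      rw [interior_Ici] at hy
      exact (hderiv y (le_of_lt hy)).differentiableAt.differentiableWithinAt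
    · intro y hy
      rw [interior_Ici] at hy
      have hy' : (0:ℝ) ≤ y := le_of_lt hy
      rw [(hderiv y hy').deriv]
      have hB : 0 < 1 + y + t := by linarith
      have hC : 0 < y + t := by linarith
      have hEq : 2 * y / (2 * t * (1 + t)) - (t + 1) * (1 + y + t)⁻¹ + t * (y + t)⁻¹
          = y * ((y + t) * (1 + y + t) - t * (1 + t))
            / (t * (1 + t) * (y + t) * (1 + y + t)) := by
        field_simp
        ring
      rw [hEq]
      apply div_nonneg
      · apply mul_nonneg hy'
        nlinarith
      · positivity
  have h0 : (0:ℝ) ∈ Set.Ici (0:ℝ) := Set.mem_Ici.mpr le_rfl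
  have hxm : x ∈ Set.Ici (0:ℝ) := hx
  have hFF := hmono h0 hxm hx
  have hF0 : F 0 = -(t + 1) * Real.log (1 + t) + t * Real.log t := by
    simp [hF]
    ring
  have hFx : F x = x ^ 2 / (2 * t * (1 + t)) - (t + 1) * Real.log (1 + x + t)
      + t * Real.log (x + t) := rfl
  rw [hF0, hFx] at hFF
  linarith

/-- Upper bound on the quantum relative entropy between two thermal states:
for `η_b ∈ (0,1]`, `n̄_T > 0`, `η_w = 1 - η_b` and any `n̄ ≥ 0`,
`D(ρ₀‖ρ₁) ≤ η_w²·n̄² / (2·η_b·n̄_T·(1+η_b·n̄_T))`. -/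
theorem thermal_qre_bound (ηb nT ηw nb : ℝ) (hηb0 : 0 < ηb) (hηb1 : ηb ≤ 1)
    (hnT : 0 < nT) (hηw : ηw = 1 - ηb) (hnb : 0 ≤ nb) :
    ηb * nT * Real.log ((1 + ηw * nb + ηb * nT) * (ηb * nT)
        / ((ηw * nb + ηb * nT) * (1 + ηb * nT)))
      + Real.log ((1 + ηw * nb + ηb * nT) / (1 + ηb * nT))
      ≤ ηw ^ 2 * nb ^ 2 / (2 * ηb * nT * (1 + ηb * nT)) := by
  have ht : 0 < ηb * nT := mul_pos hηb0 hnT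
  have hx : 0 ≤ ηw * nb := mul_nonneg (by linarith [hηw.ge]; ) hnb
  have key := thermal_qre_key (ηb * nT) (ηw * nb) ht hx
  set t := ηb * nT with htdef
  set x := ηw * nb with hxdef
  have hB : 0 < 1 + x + t := by linarith
  have hC : 0 < x + t := by linarith
  have h1t : 0 < 1 + t := by linarith
  rw [Real.log_div (by positivity) (by positivity), Real.log_mul hB.ne' ht.ne',
    Real.log_mul hC.ne' h1t.ne', Real.log_div hB.ne' h1t.ne']
  have hxx : ηw ^ 2 * nb ^ 2 = x ^ 2 := by rw [mul_pow]
  rw [hxx]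
  have e : 2 * ηb * nT * (1 + t) = 2 * t * (1 + t) := by rw [htdef]; ring
  rw [e]
  linarith
end

section
/- Let λ > 0, μ ≥ 0, and q ∈ [0,1]. Let P₀ = Poisson(λ) and P₁ = (1−q)·Poisson(λ) + q·Poisson(λ+μ) (a mixture of Poisson distributions on ℕ). Then the relative entropy satisfies D(P₀‖P₁) = −Σ_{y=0}^∞ (λ^y e^{−λ}/y!) · ln[ 1 − q + q·(1 + μ/λ)^y · e^{−μ} ] ≤ (q²/2)·( e^{μ²/λ} − 1 ). -/
/-!
Write `P₁ = P₀ · (1 + q t)` with `t = r - 1`, where `r = Po(λ+μ)/Po(λ)` has `P₀`-mean one.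
The function `φ = logRemainder` satisfies `φ(q t) ≤ q³ φ(t)` for `q ∈ [0, 1]`, `t > -1`
(as a function of `t`, the difference has derivative `q³ t³ (1 - q) / ((1 + t) (1 + q t))`, of
the sign of `t`, and vanishes at `0`), so `-log (1 + q t) ≤ -q t + q² t²/2 + q³ φ(t)`. Taking `P₀`-expectations,
`D(P₀‖P₁) ≤ q² χ²/2 - q³ (χ²/2 - D(P₀‖Po(λ+μ)))` with `χ² = e^{μ²/λ} - 1`, and the cubic term
has the right sign because `D(P₀‖Po(λ+μ)) = μ - λ log (1 + μ/λ) ≤ μ²/(2λ) ≤ χ²/2`.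
-/

open Real Set

lemma isMinOn_zero_of_mul_deriv_nonneg {f f' : ℝ → ℝ} {s : Set ℝ} (hs : s.OrdConnected)
    (h0 : 0 ∈ s) (hf : ∀ x ∈ s, HasDerivAt f (f' x) x) (hf' : ∀ x ∈ s, 0 ≤ x * f' x) :
    IsMinOn f s 0 := by
  intro t ht
  have hcont : ContinuousOn f s := fun x hx => (hf x hx).continuousAt.continuousWithinAt
  rcases le_total 0 t with h | h
  · have hsub : Icc 0 t ⊆ s := hs.out h0 ht
    refine monotoneOn_of_hasDerivWithinAt_nonneg (convex_Icc 0 t) (hcont.mono hsub)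
      (fun x hx => (hf x (hsub (interior_subset hx))).hasDerivWithinAt) (fun x hx => ?_)
      ⟨le_rfl, h⟩ ⟨h, le_rfl⟩ h
    rw [interior_Icc] at hx
    exact nonneg_of_mul_nonneg_right (hf' x (hsub (Ioo_subset_Icc_self hx))) hx.1
  · have hsub : Icc t 0 ⊆ s := hs.out ht h0
    refine antitoneOn_of_hasDerivWithinAt_nonpos (convex_Icc t 0) (hcont.mono hsub)
      (fun x hx => (hf x (hsub (interior_subset hx))).hasDerivWithinAt) (fun x hx => ?_)
      ⟨le_rfl, h⟩ ⟨h, le_rfl⟩ h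
    rw [interior_Icc] at hx
    exact nonpos_of_mul_nonneg_right (hf' x (hsub (Ioo_subset_Icc_self hx))) hx.2

noncomputable def logRemainder (t : ℝ) : ℝ := t - t ^ 2 / 2 - log (1 + t)

lemma hasDerivAt_logRemainder {t : ℝ} (ht : -1 < t) :
    HasDerivAt logRemainder (-t ^ 2 / (1 + t)) t := by
  have h1 : 1 + t ≠ 0 := by linarith
  have hlog : HasDerivAt (fun x => log (1 + x)) (1 / (1 + t)) t := by
    simpa using ((hasDerivAt_id t).const_add 1).log h1
  have hsq : HasDerivAt (fun x : ℝ => x ^ 2 / 2) t t := by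
    simpa using (hasDerivAt_pow 2 t).div_const 2
  exact (((hasDerivAt_id t).sub hsq).sub hlog).congr_deriv (by field_simp; ring)

lemma one_add_mul_pos {q x : ℝ} (hx : -1 < x) (hq0 : 0 ≤ q) (hq1 : q ≤ 1) : 0 < 1 + q * x := by
  rcases le_total 0 x with h | h <;> nlinarith

lemma logRemainder_mul_le {t q : ℝ} (ht : -1 < t) (hq0 : 0 ≤ q) (hq1 : q ≤ 1) :
    logRemainder (q * t) ≤ q ^ 3 * logRemainder t := by
  have hmin := isMinOn_zero_of_mul_deriv_nonneg
    (f := fun x => q ^ 3 * logRemainder x - logRemainder (q * x))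
    (f' := fun x => q ^ 3 * x ^ 3 * (1 - q) / ((1 + x) * (1 + q * x)))
    ordConnected_Ioi (by norm_num) (fun x hx => ?_) (fun x hx => ?_) ht
  · simpa [logRemainder] using hmin
  · have h1 : 1 + x ≠ 0 := by linarith [mem_Ioi.1 hx]
    have h2 := one_add_mul_pos hx hq0 hq1
    have hcomp := (hasDerivAt_logRemainder (by linarith : -1 < q * x)).comp x
      ((hasDerivAt_id x).const_mul q)
    refine ((hasDerivAt_logRemainder hx).const_mul (q ^ 3) |>.sub hcomp).congr_deriv ?_
    field_simp
    ring
  · have h1 : 0 < 1 + x := by linarith [mem_Ioi.1 hx]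
    have h2 := one_add_mul_pos hx hq0 hq1
    have : 0 ≤ q ^ 3 * x ^ 4 * (1 - q) / ((1 + x) * (1 + q * x)) := by
      have : 0 ≤ 1 - q := by linarith
      positivity
    convert this using 1
    ring

/-- `V` is the χ²-divergence of `r • p` from `p`, and `-L` the relative entropy `D(p ‖ r • p)`. -/
theorem neg_tsum_mul_log_mixture_le {ι : Type*} {p r : ι → ℝ} {q V L : ℝ}
    (hp : ∀ i, 0 ≤ p i) (hr : ∀ i, 0 < r i) (hq0 : 0 ≤ q) (hq1 : q ≤ 1)
    (hp1 : HasSum p 1) (hpr : HasSum (fun i => p i * r i) 1)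
    (hV : HasSum (fun i => p i * (r i - 1) ^ 2) V) (hL : HasSum (fun i => p i * log (r i)) L) :
    -∑' i, p i * log (1 - q + q * r i) ≤ q ^ 2 / 2 * V - q ^ 3 * (V / 2 + L) := by
  have hmean : HasSum (fun i => p i * (r i - 1)) 0 := by
    simpa only [mul_sub, mul_one, sub_self] using hpr.sub hp1
  have hmix : ∀ i, 1 - q + q * r i = 1 + q * (r i - 1) := fun i => by ring
  have hlower : HasSum (fun i => p i * (q * (r i - 1) - (q * (r i - 1)) ^ 2 / 2
      - q ^ 3 * logRemainder (r i - 1))) (-(q ^ 2 / 2 * V - q ^ 3 * (V / 2 + L))) := by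
    have h := ((hmean.mul_left (q - q ^ 3)).sub (hV.mul_left ((q ^ 2 - q ^ 3) / 2))).add
      (hL.mul_left (q ^ 3))
    rw [show (q - q ^ 3) * 0 - (q ^ 2 - q ^ 3) / 2 * V + q ^ 3 * L
      = -(q ^ 2 / 2 * V - q ^ 3 * (V / 2 + L)) by ring] at h
    refine h.congr_fun fun i => ?_
    simp only [logRemainder, add_sub_cancel]
    ring
  have hupper : HasSum (fun i => p i * (q * (r i - 1))) 0 := by
    simpa only [mul_left_comm, mul_zero] using hmean.mul_left q
  have hle_lower : ∀ i, p i * (q * (r i - 1) - (q * (r i - 1)) ^ 2 / 2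
      - q ^ 3 * logRemainder (r i - 1)) ≤ p i * log (1 - q + q * r i) := fun i => by
    refine mul_le_mul_of_nonneg_left ?_ (hp i)
    have := logRemainder_mul_le (by linarith [hr i] : -1 < r i - 1) hq0 hq1
    rw [logRemainder, ← hmix] at this
    linarith
  have hle_upper : ∀ i, p i * log (1 - q + q * r i) ≤ p i * (q * (r i - 1)) := fun i => by
    refine mul_le_mul_of_nonneg_left ?_ (hp i)
    have hpos := one_add_mul_pos (by linarith [hr i] : -1 < r i - 1) hq0 hq1
    rw [hmix]
    linarith [log_le_sub_one_of_pos hpos]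
  have hsummable : Summable fun i => p i * log (1 - q + q * r i) := by
    have := (hupper.summable.sub hlower.summable).of_nonneg_of_le
      (fun i => sub_nonneg.2 (hle_lower i)) (fun i => sub_le_sub_right (hle_upper i) _)
    simpa using this.add hlower.summable
  linarith [hlower.tsum_eq ▸ hlower.summable.tsum_le_tsum hle_lower hsummable]

noncomputable def poissonWeight (x : ℝ) (n : ℕ) : ℝ := x ^ n * exp (-x) / n.factorial

lemma poissonWeight_nonneg {x : ℝ} (hx : 0 ≤ x) (n : ℕ) : 0 ≤ poissonWeight x n := by
  unfold poissonWeight; positivity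

lemma hasSum_poissonWeight_mul_pow (x c : ℝ) :
    HasSum (fun n => poissonWeight x n * c ^ n) (exp (x * (c - 1))) := by
  have h := (NormedSpace.expSeries_div_hasSum_exp (x * c)).mul_left (exp (-x))
  rw [← exp_eq_exp_ℝ, ← exp_add, show -x + x * c = x * (c - 1) by ring] at h
  refine h.congr_fun fun n => ?_
  simp only [poissonWeight, mul_pow]
  ring

lemma hasSum_poissonWeight (x : ℝ) : HasSum (poissonWeight x) 1 := by
  simpa using hasSum_poissonWeight_mul_pow x 1

lemma hasSum_poissonWeight_mul_nat (x : ℝ) : HasSum (fun n => poissonWeight x n * n) x := by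
  rw [← hasSum_nat_add_iff' 1]
  simp only [Finset.range_one, Finset.sum_singleton, Nat.cast_zero, mul_zero, sub_zero]
  refine (mul_one x ▸ (hasSum_poissonWeight x).mul_left x).congr_fun fun n => ?_
  simp only [poissonWeight, Nat.factorial_succ, Nat.cast_mul]
  field_simp
  ring

/-- The likelihood ratio `Po(λ+μ)(n) / Po(λ)(n)`. -/
noncomputable def poissonRatio (lam mu : ℝ) (n : ℕ) : ℝ := (1 + mu / lam) ^ n * exp (-mu)

section
variable {lam mu : ℝ}

lemma poissonRatio_pos (h : 0 < 1 + mu / lam) (n : ℕ) : 0 < poissonRatio lam mu n := by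
  unfold poissonRatio; positivity

lemma hasSum_poissonWeight_mul_poissonRatio (hlam : lam ≠ 0) :
    HasSum (fun n => poissonWeight lam n * poissonRatio lam mu n) 1 := by
  have h := (hasSum_poissonWeight_mul_pow lam (1 + mu / lam)).mul_right (exp (-mu))
  rw [← exp_add, show lam * (1 + mu / lam - 1) + -mu = 0 by field_simp; ring, exp_zero] at h
  exact h.congr_fun fun n => by simp only [poissonRatio]; ring

lemma hasSum_poissonWeight_mul_poissonRatio_sub_one_sq (hlam : lam ≠ 0) :
    HasSum (fun n => poissonWeight lam n * (poissonRatio lam mu n - 1) ^ 2)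
      (exp (mu ^ 2 / lam) - 1) := by
  have hsq := (hasSum_poissonWeight_mul_pow lam ((1 + mu / lam) ^ 2)).mul_right (exp (-mu) ^ 2)
  rw [show exp (lam * ((1 + mu / lam) ^ 2 - 1)) * exp (-mu) ^ 2 = exp (mu ^ 2 / lam) by
    rw [← exp_nat_mul, ← exp_add]; field_simp; ring_nf] at hsq
  have h := (hsq.sub ((hasSum_poissonWeight_mul_poissonRatio (mu := mu) hlam).mul_left 2)).add
    (hasSum_poissonWeight lam)
  rw [show exp (mu ^ 2 / lam) - 2 * 1 + 1 = exp (mu ^ 2 / lam) - 1 by ring] at h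
  exact h.congr_fun fun n => by simp only [poissonRatio, ← pow_mul]; ring

lemma hasSum_poissonWeight_mul_log_poissonRatio (h : 0 < 1 + mu / lam) :
    HasSum (fun n => poissonWeight lam n * log (poissonRatio lam mu n))
      (lam * log (1 + mu / lam) - mu) := by
  have h' := ((hasSum_poissonWeight_mul_nat lam).mul_right (log (1 + mu / lam))).sub
    ((hasSum_poissonWeight lam).mul_left mu)
  rw [mul_one] at h'
  refine h'.congr_fun fun n => ?_
  rw [poissonRatio, log_mul (pow_pos h n).ne' (exp_pos _).ne', log_pow, log_exp]
  ring

/-- `D(Po(λ) ‖ Po(λ+μ)) ≤ χ²(Po(λ+μ) ‖ Po(λ)) / 2`. -/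
lemma sub_mul_log_one_add_div_le (hlam : 0 < lam) (hmu : 0 ≤ mu) :
    mu - lam * log (1 + mu / lam) ≤ (exp (mu ^ 2 / lam) - 1) / 2 := by
  have ha : 0 ≤ mu / lam := div_nonneg hmu hlam.le
  have hlog := mul_le_mul_of_nonneg_left (le_log_one_add_of_nonneg ha) hlam.le
  have hquad : mu - lam * (2 * (mu / lam) / (mu / lam + 2)) ≤ mu ^ 2 / lam / 2 := by
    field_simp
    nlinarith
  linarith [add_one_le_exp (mu ^ 2 / lam)]

end

/-- Relative entropy between a Poisson distribution `Poisson(λ)` and the mixture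
`(1−q)·Poisson(λ) + q·Poisson(λ+μ)` is at most `(q²/2)·(e^{μ²/λ} − 1)`. -/
theorem poisson_mixture_kl_bound (lam mu q : ℝ) (hlam : 0 < lam) (hmu : 0 ≤ mu)
    (hq0 : 0 ≤ q) (hq1 : q ≤ 1) :
    -∑' y : ℕ, (lam ^ y * Real.exp (-lam) / (Nat.factorial y : ℝ))
        * Real.log (1 - q + q * (1 + mu / lam) ^ y * Real.exp (-mu))
      ≤ q ^ 2 / 2 * (Real.exp (mu ^ 2 / lam) - 1) := by
  have hρ : 0 < 1 + mu / lam := by positivity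
  have hmix := neg_tsum_mul_log_mixture_le (poissonWeight_nonneg hlam.le) (poissonRatio_pos hρ)
    hq0 hq1 (hasSum_poissonWeight lam) (hasSum_poissonWeight_mul_poissonRatio hlam.ne')
    (hasSum_poissonWeight_mul_poissonRatio_sub_one_sq hlam.ne')
    (hasSum_poissonWeight_mul_log_poissonRatio hρ)
  simp only [poissonWeight, poissonRatio, ← mul_assoc] at hmix
  have hcorr : 0 ≤ q ^ 3 * ((exp (mu ^ 2 / lam) - 1) / 2 + (lam * log (1 + mu / lam) - mu)) :=
    mul_nonneg (pow_nonneg hq0 3) (by linarith [sub_mul_log_one_add_div_le hlam hmu])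
  linarith
end

section
/- Combining Pinsker's inequality, additivity of relative entropy, and the thermal-state relative-entropy bound: if Willie discriminates n i.i.d. copies of thermal distributions with mean photon numbers η_b·n̄_T and η_w·n̄ + η_b·n̄_T (η_b ∈ (0,1], η_w = 1−η_b, n̄_T > 0, n̄ ≥ 0) with uniform prior, then his minimum error probability satisfies P_e ≥ 1/2 − η_w·n̄·√n / (4·√(η_b·n̄_T·(1+η_b·n̄_T))). In particular, choosing n̄ = 4ε·√(η_b·n̄_T·(1+η_b·n̄_T)) / (√n·η_w) gives P_e ≥ 1/2 − ε. -/
/-- The photon-number distribution of a single-mode thermal state with mean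
photon number `m`. -/
noncomputable def thermalPMF (m : ℝ) : ℕ → ℝ := fun k => m ^ k / (1 + m) ^ (k + 1)

/-! Rather than through Pinsker's inequality and relative entropy, the total variation distance
is controlled by the Bhattacharyya coefficient `c = ∑ √(p q)`, which is multiplicative over i.i.d.
modes: Cauchy–Schwarz gives `∑ |Pⁿ - Qⁿ| ≤ 2√(1 - c²ⁿ)` and Bernoulli `1 - c²ⁿ ≤ n(1 - c²)`.
For geometric distributions `c` has a closed form, and `1 - c² ≤ (b - a)² / (4a(1 + a))`, which
yields the same bound `√n (b - a) / √(a(1 + a))` as the chain through Pinsker's inequality. -/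

open Finset Real

theorem hasSum_pow_div_pow_succ {p q : ℝ} (hp : 0 ≤ p) (hpq : p < q) :
    HasSum (fun k : ℕ => p ^ k / q ^ (k + 1)) (q - p)⁻¹ := by
  have hq : 0 < q := hp.trans_lt hpq
  have h := (hasSum_geometric_of_lt_one (div_nonneg hp hq.le) ((div_lt_one hq).2 hpq)).mul_right
    q⁻¹
  rw [one_sub_div hq.ne', inv_div, show q / (q - p) * q⁻¹ = (q - p)⁻¹ by field_simp] at h
  refine (funext fun k => ?_ : (fun k : ℕ => p ^ k / q ^ (k + 1)) = _) ▸ h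
  rw [div_pow, pow_succ, ← div_div, div_eq_mul_inv (p ^ k / q ^ k)]

theorem hasSum_pi_prod_pow {α : Type*} {f : α → ℝ} (hf : ∀ a, 0 ≤ f a) {s : ℝ} (hs : HasSum f s)
    (n : ℕ) : HasSum (fun x : Fin n → α => ∏ i, f (x i)) (s ^ n) := by
  induction n with
  | zero => simp
  | succ n ih =>
    have hF : ∀ x : Fin n → α, 0 ≤ ∏ i, f (x i) := fun x => prod_nonneg fun i _ => hf (x i)
    have hprod : HasSum (fun y : α × (Fin n → α) => f y.1 * ∏ i, f (y.2 i)) (s * s ^ n) :=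
      HasSum.mul (g := fun x : Fin n → α => ∏ i, f (x i)) hs ih
        (Summable.mul_of_nonneg (f := f) (g := fun x : Fin n → α => ∏ i, f (x i))
          hs.summable ih.summable hf hF)
    rw [pow_succ', ← (Fin.consEquiv fun _ => α).hasSum_iff]
    simpa [Fin.consEquiv, Fin.prod_univ_succ, Function.comp_def] using hprod

theorem one_sub_pow_sq_le (c : ℝ) (n : ℕ) : 1 - (c ^ n) ^ 2 ≤ n * (1 - c ^ 2) := by
  have h := one_add_mul_le_pow (show -2 ≤ c ^ 2 - 1 by nlinarith [sq_nonneg c]) n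
  rw [add_sub_cancel, ← pow_mul, pow_mul'] at h
  linarith

theorem tsum_abs_sub_le_of_hasSum_sqrt_mul {ι : Type*} {P Q : ι → ℝ}
    (hP0 : ∀ x, 0 ≤ P x) (hQ0 : ∀ x, 0 ≤ Q x) (hP : HasSum P 1) (hQ : HasSum Q 1) {c : ℝ}
    (hc : HasSum (fun x => √(P x * Q x)) c) :
    ∑' x, |P x - Q x| ≤ 2 * √(1 - c ^ 2) := by
  have hsq : ∀ x, (√(P x) + √(Q x)) ^ 2 = P x + Q x + 2 * √(P x * Q x) := fun x => by
    rw [add_sq, sq_sqrt (hP0 x), sq_sqrt (hQ0 x), sqrt_mul (hP0 x)]; ring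
  have hsq' : ∀ x, (√(P x) - √(Q x)) ^ 2 = P x + Q x - 2 * √(P x * Q x) := fun x => by
    rw [sub_sq, sq_sqrt (hP0 x), sq_sqrt (hQ0 x), sqrt_mul (hP0 x)]; ring
  have hsum : HasSum (fun x => (√(P x) + √(Q x)) ^ 2) (2 + 2 * c) := by
    simpa only [hsq, one_add_one_eq_two] using (hP.add hQ).add (hc.mul_left 2)
  have hdiff : HasSum (fun x => (√(P x) - √(Q x)) ^ 2) (2 - 2 * c) := by
    simpa only [hsq', one_add_one_eq_two] using (hP.add hQ).sub (hc.mul_left 2)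
  have hdiff0 : 0 ≤ 2 - 2 * c := hdiff.nonneg fun _ => sq_nonneg _
  have hsum0 : 0 ≤ 2 + 2 * c := hsum.nonneg fun _ => sq_nonneg _
  obtain ⟨C, -, hC, hCsum⟩ := inner_le_Lp_mul_Lq_hasSum_of_nonneg HolderConjugate.two_two
    (f := fun x => |√(P x) - √(Q x)|) (g := fun x => √(P x) + √(Q x))
    (sqrt_nonneg (2 - 2 * c)) (sqrt_nonneg (2 + 2 * c)) (fun _ => abs_nonneg _)
    (fun _ => by positivity)
    (by simpa only [rpow_two, sq_abs, sq_sqrt hdiff0] using hdiff)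
    (by simpa only [rpow_two, sq_sqrt hsum0] using hsum)
  have hfactor : ∀ x, |P x - Q x| = |√(P x) - √(Q x)| * (√(P x) + √(Q x)) := fun x => by
    rw [← abs_of_nonneg (by positivity : 0 ≤ √(P x) + √(Q x)), ← abs_mul, ← sq_sqrt (hP0 x),
      ← sq_sqrt (hQ0 x), sqrt_sq (sqrt_nonneg _), sqrt_sq (sqrt_nonneg _)]
    ring_nf
  calc ∑' x, |P x - Q x| = C := by simp only [hfactor, hCsum.tsum_eq]
    _ ≤ √(2 - 2 * c) * √(2 + 2 * c) := hC
    _ = 2 * √(1 - c ^ 2) := by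
      rw [← sqrt_mul hdiff0, show (2 - 2 * c) * (2 + 2 * c) = 2 ^ 2 * (1 - c ^ 2) by ring,
        sqrt_mul (sq_nonneg 2), sqrt_sq zero_le_two]

theorem thermalPMF_nonneg {m : ℝ} (hm : 0 ≤ m) (k : ℕ) : 0 ≤ thermalPMF m k := by
  unfold thermalPMF; positivity

theorem hasSum_thermalPMF {m : ℝ} (hm : 0 ≤ m) : HasSum (thermalPMF m) 1 := by
  have h := hasSum_pow_div_pow_succ hm (lt_one_add m)
  rwa [add_sub_cancel_right, inv_one] at h

/-- Closed form of the Bhattacharyya coefficient `∑ₖ √(thermalPMF a k * thermalPMF b k)`. -/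
noncomputable def thermalBhattacharyya (a b : ℝ) : ℝ := (√((1 + a) * (1 + b)) - √(a * b))⁻¹

theorem hasSum_sqrt_thermalPMF_mul {a b : ℝ} (ha : 0 ≤ a) (hb : 0 ≤ b) :
    HasSum (fun k => √(thermalPMF a k * thermalPMF b k)) (thermalBhattacharyya a b) := by
  have hlt : √(a * b) < √((1 + a) * (1 + b)) := sqrt_lt_sqrt (by positivity) (by nlinarith)
  have hterm : (fun k => √(thermalPMF a k * thermalPMF b k))
      = fun k => √(a * b) ^ k / √((1 + a) * (1 + b)) ^ (k + 1) := funext fun k => by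
    rw [sqrt_eq_iff_eq_sq (mul_nonneg (thermalPMF_nonneg ha k) (thermalPMF_nonneg hb k))
      (by positivity), div_pow, ← pow_mul, ← pow_mul, mul_comm k, mul_comm (k + 1), pow_mul,
      pow_mul, sq_sqrt (by positivity), sq_sqrt (by positivity), thermalPMF, thermalPMF,
      div_mul_div_comm, mul_pow, mul_pow]
  rw [hterm]
  exact hasSum_pow_div_pow_succ (sqrt_nonneg _) hlt

theorem one_sub_thermalBhattacharyya_sq_le {a b : ℝ} (ha : 0 < a) (hab : a ≤ b) :
    1 - thermalBhattacharyya a b ^ 2 ≤ (b - a) ^ 2 / (4 * (a * (1 + a))) := by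
  have hb : 0 < b := ha.trans_le hab
  set r := √(a * (1 + b))
  set t := √(b * (1 + a))
  have hr2 : r ^ 2 = a * (1 + b) := sq_sqrt (by positivity)
  have ht2 : t ^ 2 = b * (1 + a) := sq_sqrt (by positivity)
  have hs2 : (√((1 + a) * (1 + b)) - √(a * b)) ^ 2 = 1 + (t - r) ^ 2 := by
    have hcross : √((1 + a) * (1 + b)) * √(a * b) = t * r := by
      rw [← sqrt_mul (by positivity), ← sqrt_mul (by positivity)]
      ring_nf
    rw [sub_sq, sq_sqrt (by positivity), sq_sqrt (by positivity), mul_assoc, hcross, sub_sq, hr2,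
      ht2]
    ring
  have hdiff : ((t - r) * (t + r)) ^ 2 = (b - a) ^ 2 := by
    rw [show (t - r) * (t + r) = t ^ 2 - r ^ 2 by ring, ht2, hr2]
    ring
  have hsum : 2 * √(a * (1 + a)) ≤ t + r := by
    rw [two_mul]
    gcongr
    · exact sqrt_le_sqrt (by nlinarith)
    · exact sqrt_le_sqrt (by nlinarith)
  calc 1 - thermalBhattacharyya a b ^ 2 = 1 - (1 + (t - r) ^ 2)⁻¹ := by
        rw [thermalBhattacharyya, inv_pow, hs2]
    _ ≤ (t - r) ^ 2 := by
        have h0 := sq_nonneg (t - r)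
        rw [sub_le_iff_le_add, ← sub_le_iff_le_add', inv_eq_one_div, le_div_iff₀ (by positivity)]
        nlinarith
    _ ≤ (b - a) ^ 2 / (4 * (a * (1 + a))) := by
        rw [le_div_iff₀ (by positivity), ← hdiff, mul_pow]
        have : 4 * (a * (1 + a)) = (2 * √(a * (1 + a))) ^ 2 := by
          rw [mul_pow, sq_sqrt (by positivity)]; ring
        rw [this]
        gcongr

theorem tsum_abs_sub_thermalPMF_prod_le {a b : ℝ} (ha : 0 < a) (hab : a ≤ b) (n : ℕ) :
    ∑' x : Fin n → ℕ, |∏ i, thermalPMF a (x i) - ∏ i, thermalPMF b (x i)|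
      ≤ √n * (b - a) / √(a * (1 + a)) := by
  have hb : 0 ≤ b := ha.le.trans hab
  have hprod_nonneg : ∀ {m : ℝ}, 0 ≤ m → ∀ x : Fin n → ℕ, 0 ≤ ∏ i, thermalPMF m (x i) :=
    fun hm x => prod_nonneg fun i _ => thermalPMF_nonneg hm (x i)
  have hprod_sum : ∀ {m : ℝ}, 0 ≤ m → HasSum (fun x : Fin n → ℕ => ∏ i, thermalPMF m (x i)) 1 :=
    fun hm => by simpa using hasSum_pi_prod_pow (thermalPMF_nonneg hm) (hasSum_thermalPMF hm) n
  have hcoeff : HasSum (fun x : Fin n → ℕ => √((∏ i, thermalPMF a (x i)) * ∏ i, thermalPMF b (x i)))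
      (thermalBhattacharyya a b ^ n) := by
    simpa only [← prod_mul_distrib, ← sqrt_prod _ fun i _ =>
        mul_nonneg (thermalPMF_nonneg ha.le _) (thermalPMF_nonneg hb _)]
      using hasSum_pi_prod_pow (fun _ => sqrt_nonneg _) (hasSum_sqrt_thermalPMF_mul ha.le hb) n
  calc _ ≤ 2 * √(1 - (thermalBhattacharyya a b ^ n) ^ 2) :=
        tsum_abs_sub_le_of_hasSum_sqrt_mul (hprod_nonneg ha.le) (hprod_nonneg hb)
          (hprod_sum ha.le) (hprod_sum hb) hcoeff
    _ ≤ 2 * √(n * ((b - a) ^ 2 / (4 * (a * (1 + a))))) := by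
        gcongr
        exact (one_sub_pow_sq_le _ n).trans
          (mul_le_mul_of_nonneg_left (one_sub_thermalBhattacharyya_sq_le ha hab) n.cast_nonneg)
    _ = √n * (b - a) / √(a * (1 + a)) := by
        rw [sqrt_mul n.cast_nonneg, sqrt_div (sq_nonneg _), sqrt_sq (sub_nonneg.2 hab),
          sqrt_mul zero_le_four, show (4 : ℝ) = 2 ^ 2 by norm_num, sqrt_sq zero_le_two]
        field_simp

/-- Willie's minimum error probability for discriminating `n` i.i.d. modes of
thermal noise (mean photon number `η_b·n̄_T`) from thermal noise plus Alice's
signal (mean photon number `η_w·n̄ + η_b·n̄_T`) with uniform prior satisfies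
`P_e ≥ 1/2 − η_w·n̄·√n / (4·√(η_b·n̄_T·(1+η_b·n̄_T)))`; in particular the choice
`n̄ = 4ε·√(η_b·n̄_T·(1+η_b·n̄_T))/(√n·η_w)` gives `P_e ≥ 1/2 − ε`. -/
theorem covert_thermal_willie_error (ηb nT ηw nb : ℝ) (n : ℕ)
    (hηb0 : 0 < ηb) (hηb1 : ηb ≤ 1) (hnT : 0 < nT) (hηw : ηw = 1 - ηb)
    (hnb : 0 ≤ nb) :
    (1 / 2 - (1 / 4) * ∑' x : Fin n → ℕ,
        |(∏ i, thermalPMF (ηb * nT) (x i))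
          - ∏ i, thermalPMF (ηw * nb + ηb * nT) (x i)|
      ≥ 1 / 2 - ηw * nb * Real.sqrt n
          / (4 * Real.sqrt (ηb * nT * (1 + ηb * nT))))
    ∧ ∀ ε : ℝ, 0 ≤ ε →
        nb = 4 * ε * Real.sqrt (ηb * nT * (1 + ηb * nT)) / (Real.sqrt n * ηw) →
        1 / 2 - (1 / 4) * ∑' x : Fin n → ℕ,
            |(∏ i, thermalPMF (ηb * nT) (x i))
              - ∏ i, thermalPMF (ηw * nb + ηb * nT) (x i)|
          ≥ 1 / 2 - ε := by
  have hsignal : 0 ≤ ηw * nb := mul_nonneg (by linarith) hnb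
  have hTV := tsum_abs_sub_thermalPMF_prod_le (mul_pos hηb0 hnT)
    (le_add_of_nonneg_left hsignal) n
  rw [add_sub_cancel_right] at hTV
  have hPe : 1 / 2 - (1 / 4) * ∑' x : Fin n → ℕ,
        |(∏ i, thermalPMF (ηb * nT) (x i)) - ∏ i, thermalPMF (ηw * nb + ηb * nT) (x i)|
      ≥ 1 / 2 - ηw * nb * √n / (4 * √(ηb * nT * (1 + ηb * nT))) := by
    rw [show ηw * nb * √n / (4 * √(ηb * nT * (1 + ηb * nT)))
      = √n * (ηw * nb) / √(ηb * nT * (1 + ηb * nT)) / 4 by ring]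
    linarith
  refine ⟨hPe, fun ε hε hnb_eq => le_trans ?_ hPe⟩
  rw [sub_le_sub_iff_left, div_le_iff₀ (by positivity)]
  rcases eq_or_ne (√n * ηw) 0 with h | h
  · rw [hnb_eq, h, div_zero, mul_zero, zero_mul]
    positivity
  · rw [hnb_eq, show ηw * (4 * ε * √(ηb * nT * (1 + ηb * nT)) / (√n * ηw)) * √n
      = ε * (4 * √(ηb * nT * (1 + ηb * nT))) * ((√n * ηw) / (√n * ηw)) by ring, div_self h,
      mul_one]
end
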